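/- Let n ≥ 1, μ > 2, let δ > 0 be the unique positive root of μ log(1+δ) = 2δ, let δ₁ ∈ (0, min{μ/2 - 1, δ}], and let u₀ ∈ L¹(ℝⁿ), u₁ ∈ L^{1,1}(ℝⁿ). For ξ with 0 < |ξ| ≤ δ₁ write r := |ξ|, h(r) := μ² log²(1+r) - 4r², λ±(r) := (-μ log(1+r) ± √(h(r)))/2, and define w(t,ξ) := ((û₁(ξ) - λ₋(r)û₀(ξ))/(λ₊(r) - λ₋(r))) e^{λ₊(r)t} + ((λ₊(r)û₀(ξ) - û₁(ξ))/(λ₊(r) - λ₋(r))) e^{λ₋(r)t} and ν(t,ξ) := P₁ (e^{λ₊(r)t} - e^{λ₋(r)t})/√(h(r)), where P₁ := ∫_{ℝⁿ} u₁(x) dx. Then there exist constants C > 0 (depending on n and μ) and t₀ > 0 such that for all t ≥ t₀: ∫_{|ξ| ≤ δ₁} |w(t,ξ) - ν(t,ξ)|² dξ ≤ C (‖u₀‖₁² + ‖u₁‖²_{1,1}) t^{-n}. -/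

import Mathlib

/-!
With `r = |ξ|`, the difference `w - ν` equals
`((û₁ - P₁ - λ₋ û₀) e^{λ₊ t} + (λ₊ û₀ - (û₁ - P₁)) e^{λ₋ t}) / (λ₊ - λ₋)`.
Here `|û₁(ξ) - P₁| ≤ r ‖u₁‖_{1,1}`, `|λ±| ≤ μ r`, and by concavity of `log` the gap
`λ₊ - λ₋ = √h(r)` is at least `c₀ r` with `c₀ = √h(δ₁) / δ₁ > 0`, so the factors `r` cancel.
Since moreover `λ± ≤ -r/μ`, `|w - ν| ≤ K e^{-t r/μ}` on the ball, and
`∫ e^{-2tr/μ} dξ = (μ/2t)^n ∫ e^{-|ξ|} dξ` gives the decay `t^{-n}`.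
-/

open MeasureTheory

/-- The Fourier transform `f̂(ξ) = ∫ e^{-i x·ξ} f(x) dx`. -/
noncomputable def fourierTransformCLM' {n : ℕ} (f : EuclideanSpace ℝ (Fin n) → ℂ)
    (ξ : EuclideanSpace ℝ (Fin n)) : ℂ :=
  ∫ x, Complex.exp (-(Complex.I * ((inner ℝ x ξ : ℝ) : ℂ))) * f x

section Fourier

variable {n : ℕ}

lemma norm_fourierTransformCLM'_le (f : EuclideanSpace ℝ (Fin n) → ℂ)
    (ξ : EuclideanSpace ℝ (Fin n)) : ‖fourierTransformCLM' f ξ‖ ≤ ∫ x, ‖f x‖ :=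
  (norm_integral_le_integral_norm _).trans_eq <| by
    simp [Complex.norm_exp]

lemma norm_fourierTransformCLM'_sub_integral_le {f : EuclideanSpace ℝ (Fin n) → ℂ}
    (hf : Integrable f) (hfw : Integrable fun x ↦ (1 + ‖x‖) * ‖f x‖)
    (ξ : EuclideanSpace ℝ (Fin n)) :
    ‖fourierTransformCLM' f ξ - ∫ x, f x‖ ≤ ‖ξ‖ * ∫ x, (1 + ‖x‖) * ‖f x‖ := by
  set e : EuclideanSpace ℝ (Fin n) → ℂ :=
    fun x ↦ Complex.exp (-(Complex.I * ((inner ℝ x ξ : ℝ) : ℂ)))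
  have he : ∀ x, ‖e x - 1‖ ≤ ‖ξ‖ * (1 + ‖x‖) := fun x ↦ by
    have h := Real.norm_exp_I_mul_ofReal_sub_one_le (x := -inner ℝ x ξ)
    rw [Complex.ofReal_neg, mul_neg, norm_neg, Real.norm_eq_abs] at h
    nlinarith [abs_real_inner_le_norm x ξ, norm_nonneg x, norm_nonneg ξ]
  have hef : Integrable fun x ↦ e x * f x :=
    hf.bdd_mul (by fun_prop) (c := 1) (.of_forall fun x ↦ by simp [e, Complex.norm_exp])
  calc ‖fourierTransformCLM' f ξ - ∫ x, f x‖ = ‖∫ x, (e x - 1) * f x‖ := by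
        rw [fourierTransformCLM', ← integral_sub hef hf]; simp only [sub_mul, one_mul]
    _ ≤ ∫ x, ‖ξ‖ * ((1 + ‖x‖) * ‖f x‖) :=
        norm_integral_le_of_norm_le (hfw.const_mul _) (.of_forall fun x ↦ by
          rw [norm_mul, ← mul_assoc]; gcongr; exact he x)
    _ = ‖ξ‖ * ∫ x, (1 + ‖x‖) * ‖f x‖ := integral_const_mul _ _

end Fourier

lemma norm_twoModes_sub_le (A B P : ℂ) (a b t : ℝ) :
    ‖(B - (b : ℂ) * A) / ((a : ℂ) - b) * Complex.exp (a * t) +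
        ((a : ℂ) * A - B) / ((a : ℂ) - b) * Complex.exp (b * t) -
        P * (((Real.exp (a * t) - Real.exp (b * t)) / (a - b) : ℝ) : ℂ)‖ ≤
      ((‖B - P‖ + |b| * ‖A‖) * Real.exp (a * t) + (|a| * ‖A‖ + ‖B - P‖) * Real.exp (b * t)) /
        |a - b| := by
  have hid : (B - (b : ℂ) * A) / ((a : ℂ) - b) * Complex.exp (a * t) +
        ((a : ℂ) * A - B) / ((a : ℂ) - b) * Complex.exp (b * t) -
        P * (((Real.exp (a * t) - Real.exp (b * t)) / (a - b) : ℝ) : ℂ) =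
      ((B - P - b * A) * Real.exp (a * t) + (a * A - (B - P)) * Real.exp (b * t)) /
        ((a - b : ℝ) : ℂ) := by
    push_cast [Complex.ofReal_exp]; ring
  rw [hid, norm_div, Complex.norm_real, Real.norm_eq_abs]
  gcongr
  refine (norm_add_le _ _).trans ?_
  simp only [norm_mul, Complex.norm_real, Real.norm_eq_abs, abs_of_pos (Real.exp_pos _)]
  gcongr <;>
    exact (norm_sub_le _ _).trans (by rw [norm_mul, Complex.norm_real, Real.norm_eq_abs])

noncomputable section CharacteristicRoots

open Real

-- `λ±` are the roots of `λ² + μ log(1 + r) λ + r² = 0`, and `h` is its discriminant.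
def charDisc (μ r : ℝ) : ℝ := μ ^ 2 * log (1 + r) ^ 2 - 4 * r ^ 2

def charRootPlus (μ r : ℝ) : ℝ := (-(μ * log (1 + r)) + √(charDisc μ r)) / 2

def charRootMinus (μ r : ℝ) : ℝ := (-(μ * log (1 + r)) - √(charDisc μ r)) / 2

variable {μ δ₁ r : ℝ}

lemma log_one_add_le_self (hr : -1 < r) : log (1 + r) ≤ r := by
  linarith [log_le_sub_one_of_pos (x := 1 + r) (by linarith)]

lemma charRootPlus_sub_charRootMinus (μ r : ℝ) :
    charRootPlus μ r - charRootMinus μ r = √(charDisc μ r) := by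
  unfold charRootPlus charRootMinus; ring

lemma charDisc_pos (hδ₁ : 0 < δ₁) (hμ : δ₁ + 2 ≤ μ) : 0 < charDisc μ δ₁ := by
  have hlog := lt_log_one_add_of_pos hδ₁
  rw [div_lt_iff₀ (by linarith)] at hlog
  have : 2 * δ₁ < μ * log (1 + δ₁) := by nlinarith [log_pos (by linarith : 1 < 1 + δ₁)]
  unfold charDisc; nlinarith

lemma div_mul_log_one_add_le_log_one_add (hδ₁ : 0 < δ₁) (hr₀ : 0 ≤ r) (hr : r ≤ δ₁) :
    r / δ₁ * log (1 + δ₁) ≤ log (1 + r) := by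
  have h := strictConcaveOn_log_Ioi.concaveOn.2 (Set.mem_Ioi.2 one_pos)
    (Set.mem_Ioi.2 (by linarith : (0 : ℝ) < 1 + δ₁))
    (sub_nonneg.2 (div_le_one_of_le₀ hr hδ₁.le)) (by positivity) (sub_add_cancel 1 (r / δ₁))
  have harg : (1 - r / δ₁) • (1 : ℝ) + (r / δ₁) • (1 + δ₁) = 1 + r := by
    simp only [smul_eq_mul]; field_simp; ring
  rw [harg] at h
  simpa using h

lemma sq_div_mul_charDisc_le (hδ₁ : 0 < δ₁) (hr₀ : 0 ≤ r) (hr : r ≤ δ₁) :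
    (r / δ₁) ^ 2 * charDisc μ δ₁ ≤ charDisc μ r := by
  have hlog := div_mul_log_one_add_le_log_one_add hδ₁ hr₀ hr
  have hsq : (r / δ₁ * log (1 + δ₁)) ^ 2 ≤ log (1 + r) ^ 2 :=
    pow_le_pow_left₀ (mul_nonneg (by positivity) (log_nonneg (by linarith))) hlog 2
  have : (r / δ₁) ^ 2 * δ₁ ^ 2 = r ^ 2 := by field_simp
  unfold charDisc; nlinarith [sq_nonneg μ]

lemma charDisc_nonneg (hδ₁ : 0 < δ₁) (hμ : δ₁ + 2 ≤ μ) (hr₀ : 0 ≤ r) (hr : r ≤ δ₁) :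
    0 ≤ charDisc μ r :=
  (mul_nonneg (sq_nonneg _) (charDisc_pos hδ₁ hμ).le).trans (sq_div_mul_charDisc_le hδ₁ hr₀ hr)

lemma sqrt_charDisc_div_mul_le (hδ₁ : 0 < δ₁) (hr₀ : 0 ≤ r) (hr : r ≤ δ₁) :
    √(charDisc μ δ₁) / δ₁ * r ≤ √(charDisc μ r) :=
  calc √(charDisc μ δ₁) / δ₁ * r = √((r / δ₁) ^ 2 * charDisc μ δ₁) := by
        rw [sqrt_mul (sq_nonneg _), sqrt_sq (by positivity)]; ring
    _ ≤ √(charDisc μ r) := sqrt_le_sqrt (sq_div_mul_charDisc_le hδ₁ hr₀ hr)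

lemma sqrt_charDisc_le (hμ : 0 ≤ μ) (hr₀ : 0 ≤ r) :
    √(charDisc μ r) ≤ μ * log (1 + r) := by
  rw [sqrt_le_left (mul_nonneg hμ (log_nonneg (by linarith))), charDisc]
  nlinarith

lemma abs_charRootPlus_le (hμ : 0 ≤ μ) (hr₀ : 0 ≤ r) : |charRootPlus μ r| ≤ μ * r := by
  have := sqrt_charDisc_le hμ hr₀
  have := mul_le_mul_of_nonneg_left (log_one_add_le_self (r := r) (by linarith)) hμ
  rw [charRootPlus, abs_le]
  constructor <;> nlinarith [sqrt_nonneg (charDisc μ r)]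

lemma abs_charRootMinus_le (hμ : 0 ≤ μ) (hr₀ : 0 ≤ r) : |charRootMinus μ r| ≤ μ * r := by
  have := sqrt_charDisc_le hμ hr₀
  have := mul_le_mul_of_nonneg_left (log_one_add_le_self (r := r) (by linarith)) hμ
  rw [charRootMinus, abs_le]
  constructor <;> nlinarith [sqrt_nonneg (charDisc μ r)]

lemma charRootMinus_le_charRootPlus (μ r : ℝ) : charRootMinus μ r ≤ charRootPlus μ r := by
  unfold charRootPlus charRootMinus; linarith [sqrt_nonneg (charDisc μ r)]

lemma charRootPlus_le (hμ : 0 < μ) (hr₀ : 0 ≤ r) (hdisc : 0 ≤ charDisc μ r) :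
    charRootPlus μ r ≤ -(r / μ) := by
  set L := log (1 + r)
  set s := √(charDisc μ r)
  have hs : s ^ 2 = μ ^ 2 * L ^ 2 - 4 * r ^ 2 := sq_sqrt hdisc
  have hsL : s ≤ μ * L := sqrt_charDisc_le hμ.le hr₀
  have hLr : μ * L ≤ μ * r :=
    mul_le_mul_of_nonneg_left (log_one_add_le_self (r := r) (by linarith)) hμ.le
  -- `μL - s = 4r² / (μL + s)` and `μL + s ≤ 2μr`
  have hkey : 2 * r ≤ μ * (μ * L - s) := by
    rcases hr₀.eq_or_lt with rfl | hr
    · nlinarith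
    · nlinarith [sqrt_nonneg (charDisc μ r)]
  have : r / μ ≤ (μ * L - s) / 2 := by rw [div_le_iff₀ hμ]; linarith
  rw [charRootPlus]; linarith

lemma twoModes_bound_le (hδ₁ : 0 < δ₁) (hμ : δ₁ + 2 ≤ μ) (hr₀ : 0 ≤ r) (hr : r ≤ δ₁)
    {t x y N₀ N₁ : ℝ} (ht : 0 ≤ t) (hx : x ≤ r * N₁) (hy₀ : 0 ≤ y) (hy : y ≤ N₀)
    (hN₁ : 0 ≤ N₁) :
    ((x + |charRootMinus μ r| * y) * exp (charRootPlus μ r * t) +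
        (|charRootPlus μ r| * y + x) * exp (charRootMinus μ r * t)) /
        |charRootPlus μ r - charRootMinus μ r| ≤
      2 * (N₁ + μ * N₀) / (√(charDisc μ δ₁) / δ₁) * exp (-(t / μ * r)) := by
  have hμ₀ : 0 < μ := by linarith
  set c₀ := √(charDisc μ δ₁) / δ₁
  have hc₀ : 0 < c₀ := div_pos (sqrt_pos.2 (charDisc_pos hδ₁ hμ)) hδ₁
  have hgap : c₀ * r ≤ |charRootPlus μ r - charRootMinus μ r| := by
    rw [charRootPlus_sub_charRootMinus, abs_of_nonneg (sqrt_nonneg _)]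
    exact sqrt_charDisc_div_mul_le hδ₁ hr₀ hr
  have hexp : ∀ ρ ≤ charRootPlus μ r, exp (ρ * t) ≤ exp (-(t / μ * r)) := fun ρ hρ ↦ by
    have := (hρ.trans (charRootPlus_le hμ₀ hr₀ (charDisc_nonneg hδ₁ hμ hr₀ hr)))
    gcongr
    calc ρ * t ≤ -(r / μ) * t := mul_le_mul_of_nonneg_right this ht
      _ = -(t / μ * r) := by ring
  have hN₀ : 0 ≤ N₀ := hy₀.trans hy
  have hcoef : ∀ ρ, |ρ| ≤ μ * r → x + |ρ| * y ≤ r * (N₁ + μ * N₀) := fun ρ hρ ↦ by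
    nlinarith [mul_le_mul hρ hy hy₀ (by positivity)]
  have hM : 0 ≤ r * (N₁ + μ * N₀) := by positivity
  apply div_le_of_le_mul₀ (abs_nonneg _) (by positivity)
  calc (x + |charRootMinus μ r| * y) * exp (charRootPlus μ r * t) +
        (|charRootPlus μ r| * y + x) * exp (charRootMinus μ r * t)
      ≤ r * (N₁ + μ * N₀) * exp (-(t / μ * r)) + r * (N₁ + μ * N₀) * exp (-(t / μ * r)) :=
        add_le_add
          (mul_le_mul (hcoef _ (abs_charRootMinus_le hμ₀.le hr₀)) (hexp _ le_rfl)
            (exp_pos _).le hM)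
          (mul_le_mul (by linarith [hcoef _ (abs_charRootPlus_le hμ₀.le hr₀)])
            (hexp _ (charRootMinus_le_charRootPlus μ r)) (exp_pos _).le hM)
    _ = 2 * (N₁ + μ * N₀) / c₀ * exp (-(t / μ * r)) * (c₀ * r) := by field_simp; ring
    _ ≤ _ := by gcongr

end CharacteristicRoots

section ExponentialDecay

variable {E : Type*} [NormedAddCommGroup E] [NormedSpace ℝ E] [FiniteDimensional ℝ E]
  [MeasurableSpace E] [BorelSpace E] (μ : Measure E) [μ.IsAddHaarMeasure]

open Module Nat in
lemma integrable_exp_neg_norm : Integrable (fun x : E ↦ Real.exp (-‖x‖)) μ := by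
  set k := finrank ℝ E + 1
  refine ((integrable_one_add_norm (μ := μ) (r := k) (by simp [k])).const_mul
    (k ! * Real.exp 1)).mono' (by fun_prop) (.of_forall fun x ↦ ?_)
  have hx : 0 < 1 + ‖x‖ := by positivity
  have hpow := Real.pow_div_factorial_le_exp _ hx.le k
  rw [div_le_iff₀ (by positivity)] at hpow
  rw [Real.norm_of_nonneg (Real.exp_pos _).le, Real.rpow_neg hx.le, Real.rpow_natCast]
  calc Real.exp (-‖x‖) = Real.exp 1 * Real.exp (-(1 + ‖x‖)) := by
        rw [← Real.exp_add]; ring_nf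
    _ ≤ Real.exp 1 * (k ! * ((1 + ‖x‖) ^ k)⁻¹) := by
        gcongr
        rw [Real.exp_neg, ← div_eq_mul_inv, le_div_iff₀ (by positivity),
          inv_mul_le_iff₀ (Real.exp_pos _)]
        exact hpow
    _ = _ := by ring

lemma integrable_exp_neg_mul_norm {a : ℝ} (ha : 0 < a) :
    Integrable (fun x : E ↦ Real.exp (-(a * ‖x‖))) μ := by
  simpa [norm_smul, abs_of_pos ha] using
    (integrable_comp_smul_iff μ (fun x : E ↦ Real.exp (-‖x‖)) ha.ne').2 (integrable_exp_neg_norm μ)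

lemma integral_exp_neg_mul_norm {a : ℝ} (ha : 0 < a) :
    ∫ x, Real.exp (-(a * ‖x‖)) ∂μ =
      (a ^ Module.finrank ℝ E)⁻¹ * ∫ x, Real.exp (-‖x‖) ∂μ := by
  simpa [norm_smul, abs_of_pos ha] using
    μ.integral_comp_smul (fun x : E ↦ Real.exp (-‖x‖)) a

lemma setIntegral_sq_norm_le_of_norm_le_mul_exp_neg_mul_norm {F : Type*} [NormedAddCommGroup F]
    {g : E → F} {s : Set E} (hs : MeasurableSet s) {K a : ℝ} (ha : 0 < a)
    (hg : ∀ x ∈ s, ‖g x‖ ≤ K * Real.exp (-(a * ‖x‖))) :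
    ∫ x in s, ‖g x‖ ^ 2 ∂μ ≤
      K ^ 2 * ((2 * a) ^ Module.finrank ℝ E)⁻¹ * ∫ x, Real.exp (-‖x‖) ∂μ := by
  have hint := (integrable_exp_neg_mul_norm μ (by positivity : 0 < 2 * a)).const_mul (K ^ 2)
  have hsq : ∀ x ∈ s, ‖g x‖ ^ 2 ≤ K ^ 2 * Real.exp (-(2 * a * ‖x‖)) := fun x hx ↦
    calc ‖g x‖ ^ 2 ≤ (K * Real.exp (-(a * ‖x‖))) ^ 2 := by gcongr; exact hg x hx
      _ = K ^ 2 * Real.exp (-(2 * a * ‖x‖)) := by rw [mul_pow, ← Real.exp_nat_mul]; ring_nf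
  calc ∫ x in s, ‖g x‖ ^ 2 ∂μ ≤ ∫ x in s, K ^ 2 * Real.exp (-(2 * a * ‖x‖)) ∂μ :=
        integral_mono_of_nonneg (.of_forall fun x ↦ by positivity) hint.restrict
          (ae_restrict_of_forall_mem hs hsq)
    _ ≤ ∫ x, K ^ 2 * Real.exp (-(2 * a * ‖x‖)) ∂μ :=
        setIntegral_le_integral hint (.of_forall fun x ↦ by positivity)
    _ = _ := by rw [integral_const_mul, integral_exp_neg_mul_norm μ (by positivity), mul_assoc]

end ExponentialDecay

theorem stmt15_general (n : ℕ) (μ δ δ₁ : ℝ) (hμ : 2 < μ)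
    (hδ₁ : 0 < δ₁) (hδ₁le : δ₁ ≤ min (μ / 2 - 1) δ)
    (u₀ u₁ : EuclideanSpace ℝ (Fin n) → ℂ)
    (hu₁ : Integrable u₁)
    (hu₁w : Integrable (fun x : EuclideanSpace ℝ (Fin n) => (1 + ‖x‖) * ‖u₁ x‖)) :
    let h : ℝ → ℝ := fun r => μ ^ 2 * Real.log (1 + r) ^ 2 - 4 * r ^ 2
    let lp : ℝ → ℝ := fun r => (-(μ * Real.log (1 + r)) + Real.sqrt (h r)) / 2
    let lm : ℝ → ℝ := fun r => (-(μ * Real.log (1 + r)) - Real.sqrt (h r)) / 2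
    let P₁ : ℂ := ∫ x, u₁ x
    let w : ℝ → EuclideanSpace ℝ (Fin n) → ℂ := fun t ξ =>
      ((fourierTransformCLM' u₁ ξ - ((lm ‖ξ‖ : ℝ) : ℂ) * fourierTransformCLM' u₀ ξ) /
          (((lp ‖ξ‖ : ℝ) : ℂ) - ((lm ‖ξ‖ : ℝ) : ℂ))) * Complex.exp ((lp ‖ξ‖ : ℂ) * (t : ℂ)) +
      ((((lp ‖ξ‖ : ℝ) : ℂ) * fourierTransformCLM' u₀ ξ - fourierTransformCLM' u₁ ξ) /
          (((lp ‖ξ‖ : ℝ) : ℂ) - ((lm ‖ξ‖ : ℝ) : ℂ))) * Complex.exp ((lm ‖ξ‖ : ℂ) * (t : ℂ))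
    let ν : ℝ → EuclideanSpace ℝ (Fin n) → ℂ := fun t ξ =>
      P₁ * (((Real.exp (lp ‖ξ‖ * t) - Real.exp (lm ‖ξ‖ * t)) / Real.sqrt (h ‖ξ‖) : ℝ) : ℂ)
    ∃ C t₀ : ℝ, 0 < C ∧ 0 < t₀ ∧ ∀ t : ℝ, t₀ ≤ t →
      (∫ ξ in Metric.closedBall (0 : EuclideanSpace ℝ (Fin n)) δ₁, ‖w t ξ - ν t ξ‖ ^ 2) ≤
        C * ((∫ x, ‖u₀ x‖) ^ 2 + (∫ x, (1 + ‖x‖) * ‖u₁ x‖) ^ 2) * t ^ (-(n : ℝ)) := by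
  intro h lp lm P₁ w ν
  have hμδ₁ : δ₁ + 2 ≤ μ := by linarith [min_le_left (μ / 2 - 1) δ]
  set N₀ := ∫ x, ‖u₀ x‖
  set N₁ := ∫ x, (1 + ‖x‖) * ‖u₁ x‖
  set c₀ := √(charDisc μ δ₁) / δ₁
  set I := ∫ ξ : EuclideanSpace ℝ (Fin n), Real.exp (-‖ξ‖)
  have hN₁ : 0 ≤ N₁ := integral_nonneg fun x ↦ by positivity
  have hc₀ : 0 < c₀ := div_pos (Real.sqrt_pos.2 (charDisc_pos hδ₁ hμδ₁)) hδ₁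
  have hI : 0 < I := integral_exp_pos (integrable_exp_neg_norm volume)
  have hpoint : ∀ t, 0 ≤ t → ∀ ξ ∈ Metric.closedBall (0 : EuclideanSpace ℝ (Fin n)) δ₁,
      ‖w t ξ - ν t ξ‖ ≤ 2 * (N₁ + μ * N₀) / c₀ * Real.exp (-(t / μ * ‖ξ‖)) := by
    intro t ht ξ hξ
    rw [mem_closedBall_zero_iff] at hξ
    have hs : √(h ‖ξ‖) = lp ‖ξ‖ - lm ‖ξ‖ := (charRootPlus_sub_charRootMinus μ ‖ξ‖).symm
    simp only [w, ν, hs]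
    exact (norm_twoModes_sub_le _ _ _ _ _ _).trans <| twoModes_bound_le hδ₁ hμδ₁
      (norm_nonneg ξ) hξ ht (norm_fourierTransformCLM'_sub_integral_le hu₁ hu₁w ξ)
      (norm_nonneg _) (norm_fourierTransformCLM'_le u₀ ξ) hN₁
  refine ⟨(2 / c₀) ^ 2 * (1 + μ ^ 2) * (μ / 2) ^ n * I, 1, by positivity, one_pos,
    fun t ht ↦ ?_⟩
  have ht₀ : 0 < t := one_pos.trans_le ht
  calc (∫ ξ in Metric.closedBall (0 : EuclideanSpace ℝ (Fin n)) δ₁, ‖w t ξ - ν t ξ‖ ^ 2)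
      ≤ (2 * (N₁ + μ * N₀) / c₀) ^ 2 * ((2 * (t / μ)) ^ n)⁻¹ * I := by
        simpa only [finrank_euclideanSpace_fin] using
          setIntegral_sq_norm_le_of_norm_le_mul_exp_neg_mul_norm volume measurableSet_closedBall
            (by positivity) (hpoint t ht₀.le)
    _ = (2 / c₀) ^ 2 * (N₁ + μ * N₀) ^ 2 * ((μ / 2) ^ n * I * t ^ (-(n : ℝ))) := by
        rw [Real.rpow_neg ht₀.le, Real.rpow_natCast, ← inv_pow, ← inv_pow, mul_inv, inv_div]
        ring
    _ ≤ (2 / c₀) ^ 2 * ((1 + μ ^ 2) * (N₀ ^ 2 + N₁ ^ 2)) *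
          ((μ / 2) ^ n * I * t ^ (-(n : ℝ))) := by
        have hCS : (N₁ + μ * N₀) ^ 2 ≤ (1 + μ ^ 2) * (N₀ ^ 2 + N₁ ^ 2) := by
          nlinarith [sq_nonneg (μ * N₁ - N₀)]
        have : 0 ≤ (μ / 2) ^ n * I * t ^ (-(n : ℝ)) := by positivity
        gcongr
    _ = (2 / c₀) ^ 2 * (1 + μ ^ 2) * (μ / 2) ^ n * I * (N₀ ^ 2 + N₁ ^ 2) * t ^ (-(n : ℝ)) := by
        ring

/-- Lemma 3.2 (low frequency estimate, `μ > 2`): for `u₀ ∈ L¹`, `u₁ ∈ L^{1,1}`,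
`∫_{|ξ|≤δ₁} |w(t,ξ) - ν(t,ξ)|² dξ ≤ C(‖u₀‖₁² + ‖u₁‖²_{1,1}) t^{-n}` for large `t`. -/
theorem stmt15 (n : ℕ) (hn : 1 ≤ n) (μ δ δ₁ : ℝ) (hμ : 2 < μ) (hδ : 0 < δ)
    (hroot : μ * Real.log (1 + δ) = 2 * δ)
    (hδ₁ : 0 < δ₁) (hδ₁le : δ₁ ≤ min (μ / 2 - 1) δ)
    (u₀ u₁ : EuclideanSpace ℝ (Fin n) → ℂ)
    (hu₀ : Integrable u₀) (hu₁ : Integrable u₁)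
    (hu₁w : Integrable (fun x : EuclideanSpace ℝ (Fin n) => (1 + ‖x‖) * ‖u₁ x‖)) :
    let h : ℝ → ℝ := fun r => μ ^ 2 * Real.log (1 + r) ^ 2 - 4 * r ^ 2
    let lp : ℝ → ℝ := fun r => (-(μ * Real.log (1 + r)) + Real.sqrt (h r)) / 2
    let lm : ℝ → ℝ := fun r => (-(μ * Real.log (1 + r)) - Real.sqrt (h r)) / 2
    let P₁ : ℂ := ∫ x, u₁ x
    let w : ℝ → EuclideanSpace ℝ (Fin n) → ℂ := fun t ξ =>
      ((fourierTransformCLM' u₁ ξ - ((lm ‖ξ‖ : ℝ) : ℂ) * fourierTransformCLM' u₀ ξ) /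
          (((lp ‖ξ‖ : ℝ) : ℂ) - ((lm ‖ξ‖ : ℝ) : ℂ))) * Complex.exp ((lp ‖ξ‖ : ℂ) * (t : ℂ)) +
      ((((lp ‖ξ‖ : ℝ) : ℂ) * fourierTransformCLM' u₀ ξ - fourierTransformCLM' u₁ ξ) /
          (((lp ‖ξ‖ : ℝ) : ℂ) - ((lm ‖ξ‖ : ℝ) : ℂ))) * Complex.exp ((lm ‖ξ‖ : ℂ) * (t : ℂ))
    let ν : ℝ → EuclideanSpace ℝ (Fin n) → ℂ := fun t ξ =>
      P₁ * (((Real.exp (lp ‖ξ‖ * t) - Real.exp (lm ‖ξ‖ * t)) / Real.sqrt (h ‖ξ‖) : ℝ) : ℂ)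
    ∃ C t₀ : ℝ, 0 < C ∧ 0 < t₀ ∧ ∀ t : ℝ, t₀ ≤ t →
      (∫ ξ in Metric.closedBall (0 : EuclideanSpace ℝ (Fin n)) δ₁, ‖w t ξ - ν t ξ‖ ^ 2) ≤
        C * ((∫ x, ‖u₀ x‖) ^ 2 + (∫ x, (1 + ‖x‖) * ‖u₁ x‖) ^ 2) * t ^ (-(n : ℝ)) :=
  stmt15_general n μ δ δ₁ hμ hδ₁ hδ₁le u₀ u₁ hu₁ hu₁w
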